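/- Let C ⊆ F_q^n be a linear code, T ⊆ {1,…,n}, and χ a nontrivial additive character of F_q. Then the Jacobi polynomial of the dual code satisfies J_{C⊥,T}(w,z,x,y) = (1/|C|) · J_{C,T}(w + (q−1)z, w − z, x + (q−1)y, x − y). -/

import Mathlib

/-!
Fix a primitive additive character `χ` of `F`. Both Jacobi polynomials are sums over a code of
products of one-coordinate factors `g i (u i)`, and the substituted factor at `b` is the Fourier
transform `∑ a, χ (b * a) * g i a` of the original one. Expanding the product of these sums and
exchanging the order of summation, the orthogonality relation
`∑ u ∈ C, χ (u ⬝ᵥ v) = |C| · [v ∈ C⊥]` (Poisson summation over `C`) leaves `|C|` times the Jacobi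
polynomial of `C⊥`.
-/

open scoped Classical

noncomputable def jacEval {F : Type*} [Field F] [Fintype F] {n : ℕ}
    (C : Submodule F (Fin n → F)) (T : Finset (Fin n)) (w z x y : ℂ) : ℂ :=
  ∑ u : C, w ^ (T.filter fun i => (u : Fin n → F) i = 0).card *
    z ^ (T.filter fun i => (u : Fin n → F) i ≠ 0).card *
    x ^ (Tᶜ.filter fun i => (u : Fin n → F) i = 0).card *
    y ^ (Tᶜ.filter fun i => (u : Fin n → F) i ≠ 0).card

open Finset

lemma AddChar.map_sum_eq_prod {A M ι : Type*} [AddCommMonoid A] [CommMonoid M] (ψ : AddChar A M)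
    (s : Finset ι) (f : ι → A) : ψ (∑ i ∈ s, f i) = ∏ i ∈ s, ψ (f i) := by
  induction s using Finset.cons_induction with
  | empty => simp
  | cons a s ha ih => rw [sum_cons, prod_cons, AddChar.map_add_eq_mul, ih]

section Orthogonality

variable {F R : Type*} [Field F] [CommRing R] [IsDomain R] {χ : AddChar F R}

lemma AddChar.IsPrimitive.sum_mulShift_mul_ite [Fintype F] (hχ : χ.IsPrimitive) (b : F)
    (A B : R) :
    ∑ a, χ (b * a) * (if a = 0 then A else B)
      = if b = 0 then A + ((Fintype.card F : R) - 1) * B else A - B := by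
  have hsplit : ∀ a : F, χ (b * a) * (if a = 0 then A else B)
      = χ (a * b) * B + if a = 0 then A - B else 0 := by
    intro a
    split_ifs with ha
    · simp [ha]
    · rw [mul_comm b, add_zero]
  simp only [hsplit, sum_add_distrib, ← sum_mul, AddChar.sum_mulShift b hχ, sum_ite_eq',
    mem_univ, if_true]
  split_ifs <;> ring

lemma AddChar.IsPrimitive.sum_comp_linearMap {M : Type*} [AddCommGroup M] [Module F M]
    [Fintype M] (hχ : χ.IsPrimitive) (φ : M →ₗ[F] F) :
    ∑ m, χ (φ m) = if φ = 0 then (Fintype.card M : R) else 0 := by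
  split_ifs with hφ
  · simp [hφ]
  obtain ⟨m₀, hm₀⟩ : ∃ m₀, φ m₀ ≠ 0 := by
    by_contra! h
    exact hφ (LinearMap.ext h)
  -- `χ ∘ φ = 1` would force `χ (a * φ m₀) = χ (φ (a • m₀)) = 1` for all `a`
  have hψ : χ.compAddMonoidHom φ.toAddMonoidHom ≠ 1 := by
    intro h
    refine hχ hm₀ (AddChar.ext _ _ fun a => ?_)
    simpa [mul_comm] using DFunLike.congr_fun h (a • m₀)
  exact AddChar.sum_eq_zero_of_ne_one hψ

variable [Fintype F] {ι : Type*} [Fintype ι] [DecidableEq ι]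

lemma AddChar.IsPrimitive.sum_submodule_dotProduct (hχ : χ.IsPrimitive) (C : Submodule F (ι → F))
    (v : ι → F) :
    ∑ u : C, χ ((u : ι → F) ⬝ᵥ v) = if ∀ u ∈ C, u ⬝ᵥ v = 0 then (Fintype.card C : R) else 0 := by
  simpa [LinearMap.ext_iff] using
    hχ.sum_comp_linearMap ((dotProductBilin F F).flip v ∘ₗ C.subtype)

theorem AddChar.IsPrimitive.sum_prod_fourier_eq_card_mul_sum_perp (hχ : χ.IsPrimitive)
    (C Cperp : Submodule F (ι → F)) (hperp : ∀ v, v ∈ Cperp ↔ ∀ u ∈ C, u ⬝ᵥ v = 0)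
    (g : ι → F → R) :
    ∑ u : C, ∏ i, ∑ a, χ ((u : ι → F) i * a) * g i a
      = Fintype.card C * ∑ v : Cperp, ∏ i, g i ((v : ι → F) i) := by
  calc ∑ u : C, ∏ i, ∑ a, χ ((u : ι → F) i * a) * g i a
      = ∑ u : C, ∑ v : ι → F, χ ((u : ι → F) ⬝ᵥ v) * ∏ i, g i (v i) := by
        refine sum_congr rfl fun u _ => ?_
        rw [Fintype.prod_sum]
        simp only [dotProduct, AddChar.map_sum_eq_prod, prod_mul_distrib]
    _ = ∑ v : ι → F, (∑ u : C, χ ((u : ι → F) ⬝ᵥ v)) * ∏ i, g i (v i) := by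
        rw [sum_comm]
        simp only [sum_mul]
    _ = ∑ v ∈ univ.filter (· ∈ Cperp), (Fintype.card C : R) * ∏ i, g i (v i) := by
        simp only [hχ.sum_submodule_dotProduct, ← hperp, ite_mul, zero_mul, sum_filter]
    _ = _ := by
        rw [← mul_sum, sum_subtype _ (p := (· ∈ Cperp)) (by simp)]

end Orthogonality

section JacobiWeight

variable {F R : Type*} {n : ℕ}

noncomputable def jacFactor [Zero F] (T : Finset (Fin n)) (w z x y : R) (i : Fin n) (a : F) : R :=
  if i ∈ T then (if a = 0 then w else z) else (if a = 0 then x else y)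

lemma prod_jacFactor [Zero F] [CommMonoid R] (T : Finset (Fin n)) (w z x y : R) (v : Fin n → F) :
    ∏ i, jacFactor T w z x y i (v i)
      = w ^ (T.filter fun i => v i = 0).card * z ^ (T.filter fun i => v i ≠ 0).card *
        x ^ (Tᶜ.filter fun i => v i = 0).card * y ^ (Tᶜ.filter fun i => v i ≠ 0).card := by
  have hT : univ.filter (· ∉ T) = Tᶜ := by ext; simp
  simp only [jacFactor, prod_ite, prod_const, filter_univ_mem, hT]
  exact (mul_assoc _ _ _).symm

lemma AddChar.IsPrimitive.sum_mul_jacFactor [Field F] [Fintype F] [CommRing R] [IsDomain R]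
    {χ : AddChar F R} (hχ : χ.IsPrimitive) (T : Finset (Fin n)) (w z x y : R) (i : Fin n)
    (b : F) :
    ∑ a, χ (b * a) * jacFactor T w z x y i a
      = jacFactor T (w + ((Fintype.card F : R) - 1) * z) (w - z)
          (x + ((Fintype.card F : R) - 1) * y) (x - y) i b := by
  by_cases hi : i ∈ T <;> simp only [jacFactor, hi, if_true, if_false, hχ.sum_mulShift_mul_ite]

lemma jacEval_eq_sum_prod_jacFactor [Field F] [Fintype F] (C : Submodule F (Fin n → F))
    (T : Finset (Fin n)) (w z x y : ℂ) :
    jacEval C T w z x y = ∑ u : C, ∏ i, jacFactor T w z x y i ((u : Fin n → F) i) := by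
  simp only [jacEval, prod_jacFactor]

end JacobiWeight

/-- The MacWilliams identity for Jacobi polynomials:
`J_{C⊥,T}(w,z,x,y) = (1/|C|) · J_{C,T}(w + (q−1)z, w − z, x + (q−1)y, x − y)`. -/
theorem jacEval_dual_macwilliams {F : Type*} [Field F] [Fintype F] {n : ℕ}
    (C Cperp : Submodule F (Fin n → F))
    (hperp : ∀ v, v ∈ Cperp ↔ ∀ u ∈ C, ∑ i, u i * v i = 0)
    (T : Finset (Fin n)) (w z x y : ℂ) :
    jacEval Cperp T w z x y
      = (Fintype.card C : ℂ)⁻¹ *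
          jacEval C T (w + ((Fintype.card F : ℂ) - 1) * z) (w - z)
            (x + ((Fintype.card F : ℂ) - 1) * y) (x - y) := by
  have hχ := AddChar.FiniteField.primitiveChar_to_Complex_isPrimitive F
  have hC : (Fintype.card C : ℂ) ≠ 0 := Nat.cast_ne_zero.mpr Fintype.card_ne_zero
  rw [eq_inv_mul_iff_mul_eq₀ hC, jacEval_eq_sum_prod_jacFactor, jacEval_eq_sum_prod_jacFactor]
  simp only [← hχ.sum_mul_jacFactor]
  exact (hχ.sum_prod_fourier_eq_card_mul_sum_perp C Cperp hperp _).symm
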